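/- Let S be a countable set, s_b ∈ S, and d : S → ℕ a function with d(s) = 0 if and only if s = s_b. Let (X_n)_{n≥0} be a time-homogeneous Markov chain on S with transition kernel P̃ such that for every s ≠ s_b, the measure P̃(s, ·) is supported on {s' ∈ S : |d(s') - d(s)| = 1} and assigns probability at least 1-β to the set {s' ∈ S : d(s') = d(s) - 1}, where 0 ≤ β < 1/2. If X_0 = s_0 almost surely, then the hitting time T = inf{n ≥ 0 : X_n = s_b} is almost surely finite and E[T] ≤ d(s_0)/(1-2β). In particular, if d(s) ≤ d_max for all s ∈ S, then E[T] ≤ d_max/(1-2β). -/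

import Mathlib

/-!
`d ∘ X` is a Lyapunov function for the chain: away from `sb` a step changes `d` by `±1`, and goes
down with probability at least `1 - β`, so the conditional expectation of `d (X (n + 1))` is at
most `d (X n) - (1 - 2β)`. Integrating this drift over the survival events `{n < T}` and
telescoping gives `(1 - 2β) ∑ₙ P(n < T) ≤ d s₀`, and `∑ₙ P(n < T) = E[T]`.
-/

open MeasureTheory ProbabilityTheory ENNReal

theorem ENat.natCast_lt_iInf_natCast_iff {p : ℕ → Prop} {n : ℕ} :
    (n : ℕ∞) < ⨅ (k : ℕ) (_ : p k), (k : ℕ∞) ↔ ∀ k ≤ n, ¬ p k := by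
  constructor
  · intro h k hkn hpk
    exact absurd (h.trans_le (iInf₂_le k hpk)) (by exact_mod_cast hkn.not_gt)
  · intro h
    rw [← ENat.add_one_le_iff (ENat.natCast_ne_top n)]
    refine le_iInf₂ fun k hpk => ?_
    have : n + 1 ≤ k := Nat.lt_of_not_le fun hkn => h k hkn hpk
    exact_mod_cast this

theorem ENat.toENNReal_eq_tsum_ite (m : ℕ∞) :
    (m : ℝ≥0∞) = ∑' n : ℕ, if (n : ℕ∞) < m then 1 else 0 := by
  induction m with
  | top => simp
  | coe k =>
    rw [tsum_eq_sum (s := Finset.range k) fun n hn => by simp_all,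
      Finset.sum_congr rfl fun n hn => if_pos (by simpa using hn)]
    simp

theorem ENNReal.mul_tsum_le_of_add_mul_le {a g : ℕ → ℝ≥0∞} {c : ℝ≥0∞}
    (h : ∀ n, a (n + 1) + c * g n ≤ a n) : c * ∑' n, g n ≤ a 0 := by
  have partial_le : ∀ N, c * ∑ k ∈ Finset.range N, g k + a N ≤ a 0 := by
    intro N
    induction N with
    | zero => simp
    | succ N ih =>
      calc c * ∑ k ∈ Finset.range (N + 1), g k + a (N + 1)
          = c * ∑ k ∈ Finset.range N, g k + (a (N + 1) + c * g N) := by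
            rw [Finset.sum_range_succ]; ring
        _ ≤ c * ∑ k ∈ Finset.range N, g k + a N := by gcongr; exact h N
        _ ≤ a 0 := ih
  rw [ENNReal.tsum_eq_iSup_nat, ENNReal.mul_iSup]
  exact iSup_le fun N => le_self_add.trans (partial_le N)

theorem ENNReal.two_mul_add_ofReal_le_one {u v : ℝ≥0∞} {β : ℝ} (huv : u + v ≤ 1)
    (hv : ENNReal.ofReal (1 - β) ≤ v) (hβ : β ≤ 1 / 2) :
    2 * u + ENNReal.ofReal (1 - 2 * β) ≤ 1 := by
  have hu_top : u ≠ ⊤ := ne_top_of_le_ne_top one_ne_top (le_self_add.trans huv)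
  have hv_top : v ≠ ⊤ := ne_top_of_le_ne_top one_ne_top (le_add_self.trans huv)
  have huv' : u.toReal + v.toReal ≤ 1 := by
    rw [← toReal_add hu_top hv_top]; exact toReal_le_of_le_ofReal zero_le_one (by simpa using huv)
  have hv' : 1 - β ≤ v.toReal := (ofReal_le_iff_le_toReal hv_top).1 hv
  rw [← toReal_le_toReal (by finiteness) one_ne_top, toReal_add (by finiteness) ofReal_ne_top,
    toReal_mul, toReal_ofReal (by linarith)]
  simp only [toReal_ofNat, toReal_one]
  linarith

theorem measure_inter_eq_setLIntegral_of_condExp_indicator {Ω : Type*} {m m0 : MeasurableSpace Ω}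
    {μ : Measure Ω} [IsFiniteMeasure μ] (hm : m ≤ m0) {C : Set Ω} (hC : MeasurableSet C)
    {f : Ω → ℝ≥0∞} (hf : AEMeasurable f μ) (hf_le : ∀ ω, f ω ≤ 1)
    (hcond : μ[C.indicator (fun _ => (1 : ℝ)) | m] =ᵐ[μ] fun ω => (f ω).toReal)
    {B : Set Ω} (hB : MeasurableSet[m] B) : μ (B ∩ C) = ∫⁻ ω in B, f ω ∂μ := by
  have hfin : ∫⁻ ω in B, f ω ∂μ ≠ ⊤ :=
    ne_top_of_le_ne_top (measure_ne_top μ B)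
      (by simpa using lintegral_mono (μ := μ.restrict B) hf_le)
  refine (toReal_eq_toReal_iff' (measure_ne_top μ _) hfin).1 ?_
  calc (μ (B ∩ C)).toReal = ∫ ω in B, C.indicator (fun _ => (1 : ℝ)) ω ∂μ := by
        rw [setIntegral_indicator hC, setIntegral_const, smul_eq_mul, mul_one, measureReal_def]
    _ = ∫ ω in B, (μ[C.indicator (fun _ => (1 : ℝ)) | m]) ω ∂μ :=
        (setIntegral_condExp hm ((integrable_const _).indicator hC) hB).symm
    _ = ∫ ω in B, (f ω).toReal ∂μ := integral_congr_ae (ae_restrict_of_ae hcond)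
    _ = (∫⁻ ω in B, f ω ∂μ).toReal :=
        integral_toReal hf.restrict (.of_forall fun ω => (hf_le ω).trans_lt one_lt_top)

theorem lintegral_add_ofReal_le_of_biased_step {S : Type*} [MeasurableSpace S] [Countable S]
    [MeasurableSingletonClass S] {P : Measure S} [IsProbabilityMeasure P] {d : S → ℕ} {n : ℕ}
    {β : ℝ} (hβ : β < 1 / 2) (hsupp : P {s | d s = n + 1 ∨ d s + 1 = n} = 1)
    (hbias : ENNReal.ofReal (1 - β) ≤ P {s | d s + 1 = n}) :
    ∫⁻ s, (d s : ℝ≥0∞) ∂P + ENNReal.ofReal (1 - 2 * β) ≤ n := by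
  set up := {s | d s = n + 1}
  -- adding `1` to both sides avoids the truncated `n - 1` on the downward move
  have hmove : ∀ᵐ s ∂P, (d s : ℝ≥0∞) + 1 = n + 2 * up.indicator 1 s := by
    have : ∀ᵐ s ∂P, d s = n + 1 ∨ d s + 1 = n :=
      (ae_iff_measure_eq MeasurableSet.of_discrete.nullMeasurableSet).2
        (by rw [hsupp, measure_univ])
    filter_upwards [this] with s hs
    rcases hs with hs | hs
    · have hs_up : s ∈ up := hs
      rw [Set.indicator_of_mem hs_up, Pi.one_apply, hs]
      push_cast; ring
    · have hs_up : s ∉ up := fun h : d s = n + 1 => by omega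
      rw [Set.indicator_of_notMem hs_up, ← hs]
      push_cast; ring
  have hmean : ∫⁻ s, (d s : ℝ≥0∞) ∂P + 1 = n + 2 * P up := by
    calc ∫⁻ s, (d s : ℝ≥0∞) ∂P + 1 = ∫⁻ s, ((d s : ℝ≥0∞) + 1) ∂P := by
          rw [lintegral_add_right _ measurable_const]; simp
      _ = ∫⁻ s, (n + 2 * up.indicator 1 s) ∂P := lintegral_congr_ae hmove
      _ = n + 2 * P up := by
          rw [lintegral_add_left measurable_const, lintegral_const_mul _ (by fun_prop),
            lintegral_indicator_one .of_discrete]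
          simp
  have hup : 2 * P up + ENNReal.ofReal (1 - 2 * β) ≤ 1 := by
    refine two_mul_add_ofReal_le_one ?_ hbias hβ.le
    calc P up + P {s | d s + 1 = n} = P (up ∪ {s | d s + 1 = n}) :=
          (measure_union (Set.disjoint_left.2 fun s (h₁ : d s = n + 1) (h₂ : d s + 1 = n) => by
            omega) .of_discrete).symm
      _ ≤ 1 := prob_le_one
  rw [← ENNReal.add_le_add_iff_right one_ne_top]
  calc ∫⁻ s, (d s : ℝ≥0∞) ∂P + ENNReal.ofReal (1 - 2 * β) + 1
      = n + (2 * P up + ENNReal.ofReal (1 - 2 * β)) := by rw [add_right_comm, hmean]; ring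
    _ ≤ n + 1 := by gcongr

section MarkovChain

variable {Ω S : Type*} {m0 : MeasurableSpace Ω} [MeasurableSpace S]

abbrev history (X : ℕ → Ω → S) (n : ℕ) : MeasurableSpace Ω :=
  ⨆ i ∈ Finset.range (n + 1), MeasurableSpace.comap (X i) inferInstance

def IsMarkovChain (μ : Measure Ω) (X : ℕ → Ω → S) (P : S → Measure S) : Prop :=
  ∀ (n : ℕ) (A : Set S), MeasurableSet A →
    μ[(X (n + 1) ⁻¹' A).indicator (fun _ => (1 : ℝ)) | history X n]
      =ᵐ[μ] fun ω => (P (X n ω) A).toReal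

variable {X : ℕ → Ω → S}

theorem history_le (hX : ∀ n, Measurable (X n)) (n : ℕ) : history X n ≤ m0 :=
  iSup₂_le fun i _ => (hX i).comap_le

theorem measurableSet_history_preimage {k n : ℕ} (hkn : k ≤ n) {C : Set S}
    (hC : MeasurableSet C) : MeasurableSet[history X n] (X k ⁻¹' C) :=
  le_iSup₂ (f := fun i (_ : i ∈ Finset.range (n + 1)) =>
      MeasurableSpace.comap (X i) inferInstance)
    k (Finset.mem_range_succ_iff.2 hkn) _ ⟨C, hC, rfl⟩

theorem measurableSet_history_forall_mem {D : Set S} (hD : MeasurableSet D) (n : ℕ) :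
    MeasurableSet[history X n] {ω | ∀ k ≤ n, X k ω ∈ D} := by
  simp only [Set.ofPred_forall]
  exact .iInter fun k => .iInter fun hkn => measurableSet_history_preimage hkn hD

variable [Countable S] [MeasurableSingletonClass S] {μ : Measure Ω} [IsFiniteMeasure μ]
  {P : S → Measure S} [∀ s, IsProbabilityMeasure (P s)]

theorem IsMarkovChain.map_restrict_eq_bind (hM : IsMarkovChain μ X P)
    (hX : ∀ n, Measurable (X n)) {n : ℕ} {B : Set Ω} (hB : MeasurableSet[history X n] B) :
    (μ.restrict B).map (X (n + 1)) = (μ.restrict B).bind fun ω => P (X n ω) := by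
  have hPX : Measurable fun ω => P (X n ω) := (measurable_of_countable P).comp (hX n)
  ext A hA
  rw [Measure.map_apply (hX _) hA, Measure.restrict_apply (hX _ hA),
    Measure.bind_apply hA hPX.aemeasurable, Set.inter_comm]
  exact measure_inter_eq_setLIntegral_of_condExp_indicator (history_le hX n) (hX _ hA)
    ((measurable_of_countable fun s => P s A).comp (hX n)).aemeasurable (fun _ => prob_le_one)
    (hM n A hA) hB

theorem IsMarkovChain.setLIntegral_comp_succ (hM : IsMarkovChain μ X P)
    (hX : ∀ n, Measurable (X n)) {n : ℕ} {B : Set Ω} (hB : MeasurableSet[history X n] B)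
    (g : S → ℝ≥0∞) :
    ∫⁻ ω in B, g (X (n + 1) ω) ∂μ = ∫⁻ ω in B, ∫⁻ s, g s ∂P (X n ω) ∂μ := by
  have hPX : Measurable fun ω => P (X n ω) := (measurable_of_countable P).comp (hX n)
  rw [← lintegral_map (measurable_of_countable g) (hX _), hM.map_restrict_eq_bind hX hB,
    Measure.lintegral_bind hPX.aemeasurable (measurable_of_countable g).aemeasurable]

theorem IsMarkovChain.mul_tsum_measure_forall_mem_le (hM : IsMarkovChain μ X P)
    (hX : ∀ n, Measurable (X n)) {D : Set S} {V : S → ℝ≥0∞} {c : ℝ≥0∞}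
    (hV : ∀ s ∈ D, ∫⁻ s', V s' ∂P s + c ≤ V s) :
    c * ∑' n, μ {ω | ∀ k ≤ n, X k ω ∈ D} ≤ ∫⁻ ω, V (X 0 ω) ∂μ := by
  set G : ℕ → Set Ω := fun n => {ω | ∀ k ≤ n, X k ω ∈ D}
  have hG : ∀ n, MeasurableSet[history X n] (G n) :=
    measurableSet_history_forall_mem .of_discrete
  have hG_succ : ∀ n, G (n + 1) ⊆ G n := fun n ω hω k hkn => hω k (hkn.trans n.le_succ)
  have hstep : ∀ n, ∫⁻ ω in G (n + 1), V (X (n + 1) ω) ∂μ + c * μ (G n)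
      ≤ ∫⁻ ω in G n, V (X n ω) ∂μ := fun n =>
    calc ∫⁻ ω in G (n + 1), V (X (n + 1) ω) ∂μ + c * μ (G n)
        ≤ ∫⁻ ω in G n, V (X (n + 1) ω) ∂μ + ∫⁻ _ in G n, c ∂μ := by
          rw [setLIntegral_const, mul_comm]; gcongr; exact hG_succ n
      _ = ∫⁻ ω in G n, (∫⁻ s', V s' ∂P (X n ω) + c) ∂μ := by
          rw [hM.setLIntegral_comp_succ hX (hG n), lintegral_add_right _ measurable_const]
      _ ≤ ∫⁻ ω in G n, V (X n ω) ∂μ :=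
          setLIntegral_mono' (history_le hX n _ (hG n)) fun ω hω => hV _ (hω n le_rfl)
  exact (ENNReal.mul_tsum_le_of_add_mul_le hstep).trans (setLIntegral_le_lintegral _ _)

end MarkovChain

section HittingTime

variable {Ω : Type*} {m0 : MeasurableSpace Ω} {μ : Measure Ω} {T : Ω → ℕ∞}

theorem lintegral_enat_eq_tsum_measure_lt
    (hT : ∀ n : ℕ, MeasurableSet {ω | (n : ℕ∞) < T ω}) :
    ∫⁻ ω, (T ω : ℝ≥0∞) ∂μ = ∑' n : ℕ, μ {ω | (n : ℕ∞) < T ω} :=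
  calc ∫⁻ ω, (T ω : ℝ≥0∞) ∂μ
        = ∫⁻ ω, ∑' n : ℕ, {ω | (n : ℕ∞) < T ω}.indicator 1 ω ∂μ :=
        lintegral_congr fun ω => by simp only [Set.indicator_apply, Set.mem_ofPred_eq,
          Pi.one_apply, ENat.toENNReal_eq_tsum_ite]
    _ = ∑' n : ℕ, μ {ω | (n : ℕ∞) < T ω} := by
        rw [lintegral_tsum fun n => (measurable_one.indicator (hT n)).aemeasurable]
        simp_rw [lintegral_indicator_one (hT _)]

theorem ae_lt_top_of_tsum_measure_lt_ne_top
    (h : ∑' n : ℕ, μ {ω | (n : ℕ∞) < T ω} ≠ ⊤) :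
    ∀ᵐ ω ∂μ, T ω < ⊤ := by
  refine ae_iff.2 (le_zero_iff.1 (ge_of_tendsto' (ENNReal.tendsto_atTop_zero_of_tsum_ne_top h)
    fun n => measure_mono fun ω hω => ?_))
  simp_all

end HittingTime

theorem biased_pathway_hitting_time_bound_general
    {Ω : Type*} {m0 : MeasurableSpace Ω} (μ : Measure Ω) [IsProbabilityMeasure μ]
    {S : Type*} [Countable S] [MeasurableSpace S] [MeasurableSingletonClass S]
    (sb : S) (d : S → ℕ)
    (β : ℝ) (hβ : β < 1 / 2)
    (P : S → Measure S) (hP : ∀ s, IsProbabilityMeasure (P s))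
    (hsupp : ∀ s, s ≠ sb → P s {s' | d s' = d s + 1 ∨ d s' + 1 = d s} = 1)
    (hbias : ∀ s, s ≠ sb → ENNReal.ofReal (1 - β) ≤ P s {s' | d s' + 1 = d s})
    (X : ℕ → Ω → S) (hXmeas : ∀ n, Measurable (X n))
    (hMarkov : ∀ (n : ℕ) (A : Set S), MeasurableSet A →
      (μ[Set.indicator (X (n + 1) ⁻¹' A) (fun _ => (1 : ℝ)) |
          ⨆ i ∈ Finset.range (n + 1), MeasurableSpace.comap (X i) inferInstance])
        =ᵐ[μ] fun ω => (P (X n ω) A).toReal)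
    (s0 : S) (hX0 : ∀ᵐ ω ∂μ, X 0 ω = s0)
    (T : Ω → ℕ∞)
    (hT : ∀ ω, T ω = ⨅ (n : ℕ) (_ : X n ω = sb), (n : ℕ∞)) :
    (∀ᵐ ω ∂μ, T ω < ⊤) ∧
      ∫⁻ ω, (T ω : ℝ≥0∞) ∂μ ≤ ENNReal.ofReal (d s0 / (1 - 2 * β)) ∧
      ∀ dmax : ℕ, (∀ s, d s ≤ dmax) →
        ∫⁻ ω, (T ω : ℝ≥0∞) ∂μ ≤ ENNReal.ofReal (dmax / (1 - 2 * β)) := by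
  have hsurvive (n : ℕ) :
      {ω | (n : ℕ∞) < T ω} = {ω | ∀ k ≤ n, X k ω ∈ ({sb}ᶜ : Set S)} := by
    simp [hT, ENat.natCast_lt_iInf_natCast_iff]
  have hdrift (s : S) (hs : s ∈ ({sb}ᶜ : Set S)) :
      ∫⁻ s', (d s' : ℝ≥0∞) ∂P s + ENNReal.ofReal (1 - 2 * β) ≤ d s :=
    lintegral_add_ofReal_le_of_biased_step hβ (hsupp s hs) (hbias s hs)
  have hET : ∫⁻ ω, (T ω : ℝ≥0∞) ∂μ = ∑' n : ℕ, μ {ω | (n : ℕ∞) < T ω} :=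
    lintegral_enat_eq_tsum_measure_lt fun n =>
      hsurvive n ▸ history_le hXmeas n _ (measurableSet_history_forall_mem .of_discrete n)
  have hmean : ENNReal.ofReal (1 - 2 * β) * ∫⁻ ω, (T ω : ℝ≥0∞) ∂μ ≤ d s0 :=
    calc ENNReal.ofReal (1 - 2 * β) * ∫⁻ ω, (T ω : ℝ≥0∞) ∂μ
        ≤ ∫⁻ ω, (d (X 0 ω) : ℝ≥0∞) ∂μ := by
          simp_rw [hET, hsurvive]
          exact IsMarkovChain.mul_tsum_measure_forall_mem_le hMarkov hXmeas hdrift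
      _ = ∫⁻ _, (d s0 : ℝ≥0∞) ∂μ :=
          lintegral_congr_ae (hX0.mono fun ω h => by simp [h])
      _ = d s0 := by simp
  have hbound : ∫⁻ ω, (T ω : ℝ≥0∞) ∂μ ≤ ENNReal.ofReal (d s0 / (1 - 2 * β)) := by
    rw [ENNReal.ofReal_div_of_pos (by linarith), ofReal_natCast,
      ENNReal.le_div_iff_mul_le (.inl (by simp; linarith)) (.inl ofReal_ne_top), mul_comm]
    exact hmean
  refine ⟨ae_lt_top_of_tsum_measure_lt_ne_top (hET ▸ ne_top_of_le_ne_top ofReal_ne_top hbound),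
    hbound, fun dmax hdmax => hbound.trans (ENNReal.ofReal_le_ofReal ?_)⟩
  gcongr
  · linarith
  · exact_mod_cast hdmax s0

/-- Proposition 1 of the paper: A time-homogeneous Markov chain on a
countable state space whose kernel, away from the target `sb`, moves only between
adjacent levels of the distance function `d` and steps one level closer to `sb` with
probability at least `1 - β` (for `β < 1/2`), hits `sb` in almost surely finite time,
with `E[T] ≤ d(s₀) / (1 - 2β)`; in particular `E[T] ≤ d_max / (1 - 2β)` whenever `d` is
bounded by `d_max`. -/
theorem biased_pathway_hitting_time_bound
    {Ω : Type*} {m0 : MeasurableSpace Ω} (μ : Measure Ω) [IsProbabilityMeasure μ]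
    {S : Type*} [Countable S] [MeasurableSpace S] [MeasurableSingletonClass S]
    (sb : S) (d : S → ℕ) (hd : ∀ s, d s = 0 ↔ s = sb)
    (β : ℝ) (hβ0 : 0 ≤ β) (hβ : β < 1 / 2)
    (P : S → Measure S) (hP : ∀ s, IsProbabilityMeasure (P s))
    (hsupp : ∀ s, s ≠ sb → P s {s' | d s' = d s + 1 ∨ d s' + 1 = d s} = 1)
    (hbias : ∀ s, s ≠ sb → ENNReal.ofReal (1 - β) ≤ P s {s' | d s' + 1 = d s})
    (X : ℕ → Ω → S) (hXmeas : ∀ n, Measurable (X n))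
    (hMarkov : ∀ (n : ℕ) (A : Set S), MeasurableSet A →
      (μ[Set.indicator (X (n + 1) ⁻¹' A) (fun _ => (1 : ℝ)) |
          ⨆ i ∈ Finset.range (n + 1), MeasurableSpace.comap (X i) inferInstance])
        =ᵐ[μ] fun ω => (P (X n ω) A).toReal)
    (s0 : S) (hX0 : ∀ᵐ ω ∂μ, X 0 ω = s0)
    (T : Ω → ℕ∞)
    (hT : ∀ ω, T ω = ⨅ (n : ℕ) (_ : X n ω = sb), (n : ℕ∞)) :
    (∀ᵐ ω ∂μ, T ω < ⊤) ∧
      ∫⁻ ω, (T ω : ℝ≥0∞) ∂μ ≤ ENNReal.ofReal (d s0 / (1 - 2 * β)) ∧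
      ∀ dmax : ℕ, (∀ s, d s ≤ dmax) →
        ∫⁻ ω, (T ω : ℝ≥0∞) ∂μ ≤ ENNReal.ofReal (dmax / (1 - 2 * β)) :=
  biased_pathway_hitting_time_bound_general (m0 := m0) μ sb d β hβ P hP hsupp hbias X hXmeas hMarkov
    s0 hX0 T hT
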